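/- Let C be a symmetric positive-definite real 3×3 matrix and define S(C) = μ(1 − (det C)^(−β/2) C⁻¹) on the open set of matrices with positive determinant. Then S is Fréchet differentiable at C and, for every symmetric 3×3 matrix H, its derivative in direction H is DS(C)[H] = μ (det C)^(−β/2) ( C⁻¹ * H * C⁻¹ + (β/2) · trace(C⁻¹ * H) · C⁻¹ ); equivalently, in components, 2·(DS(C)[H])_{ij} = μ (det C)^(−β/2) Σ_{k,l} ( (C⁻¹)_{il}(C⁻¹)_{kj} + (C⁻¹)_{ik}(C⁻¹)_{jl} + β (C⁻¹)_{ij}(C⁻¹)_{kl} ) H_{kl}. -/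

import Mathlib

open Matrix
open scoped BigOperators

noncomputable section

attribute [local instance]
  Matrix.frobeniusNormedAddCommGroup Matrix.frobeniusNormedSpace

/-- The second Piola–Kirchhoff stress of the Neo-Hookean model as a function of
the right Cauchy–Green tensor: `S(C) = μ (1 − (det C)^(−β/2) C⁻¹)`. -/
def secondPKofC (μ β : ℝ) (C : Matrix (Fin 3) (Fin 3) ℝ) :
    Matrix (Fin 3) (Fin 3) ℝ :=
  μ • ((1 : Matrix (Fin 3) (Fin 3) ℝ) - C.det ^ (-β / 2) • C⁻¹)

/-! Jacobi's formula `D det_C [H] = tr (adj C * H)`, obtained by differentiating the determinant as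
an alternating map of the rows, and the derivative `H ↦ -C⁻¹ H C⁻¹` of inversion give, through the
chain and product rules and `adj C = det C • C⁻¹`,
`D (det ^ p • inv)_C [H] = (det C) ^ p • (p tr (C⁻¹ H) • C⁻¹ - C⁻¹ H C⁻¹)`; take `p = -β / 2`.
In the component form, the symmetry of `C⁻¹` and of `H` lets `C⁻¹ H C⁻¹` be written in the two
index orders that the tangent modulus symmetrizes over. -/

namespace Matrix

variable {n : Type*} [Fintype n]

theorem sum_det_updateRow [DecidableEq n] {R : Type*} [CommRing R] (A H : Matrix n n R) :
    ∑ i, (A.updateRow i (H i)).det = (A.adjugate * H).trace := by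
  have h : ∀ i, (A.updateRow i (H i)).det = ∑ j, A.adjugate j i * H i j := by
    intro i
    rw [← cramer_transpose_apply, cramer_eq_adjugate_mulVec, mulVec, dotProduct]
    simp [← adjugate_transpose]
  simp only [h, trace, diag, mul_apply]
  exact Finset.sum_comm

theorem adjugate_eq_det_smul_inv [DecidableEq n] {K : Type*} [Field K] {A : Matrix n n K}
    (hA : A.det ≠ 0) : A.adjugate = A.det • A⁻¹ := by
  rw [inv_def, Ring.inverse_eq_inv', smul_smul, mul_inv_cancel₀ hA, one_smul]

theorem two_mul_mul_mul_add_trace_smul_apply {K : Type*} [Field K] [NeZero (2 : K)]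
    {A H : Matrix n n K} (hA : Aᵀ = A) (hH : Hᵀ = H) (β : K) (i j : n) :
    2 * (A * H * A + (β / 2 * (A * H).trace) • A) i j
      = ∑ k, ∑ l, (A i l * A k j + A i k * A j l + β * A i j * A k l) * H k l := by
  have hA' : ∀ k l, A l k = A k l := fun k l => by rw [← transpose_apply A k l, hA]
  have hH' : ∀ k l, H l k = H k l := fun k l => by rw [← transpose_apply H k l, hH]
  have h₁ : (A * H * A) i j = ∑ k, ∑ l, A i l * A k j * H k l := by
    simp only [mul_apply, Finset.sum_mul]
    refine Finset.sum_congr rfl fun k _ => Finset.sum_congr rfl fun l _ => ?_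
    rw [hH' k l]; ring
  have h₂ : (A * H * A) i j = ∑ k, ∑ l, A i k * A j l * H k l := by
    simp only [mul_apply, Finset.sum_mul]
    rw [Finset.sum_comm]
    refine Finset.sum_congr rfl fun k _ => Finset.sum_congr rfl fun l _ => ?_
    rw [hA' j l]; ring
  have h₃ : ∑ k, ∑ l, β * A i j * A k l * H k l = β * A i j * (A * H).trace := by
    simp only [trace, diag_apply, mul_apply, Finset.mul_sum, hH', mul_assoc]
  rw [add_apply, smul_apply, smul_eq_mul]
  simp only [add_mul, Finset.sum_add_distrib]
  rw [← h₁, ← h₂, h₃]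
  field_simp
  ring

variable [DecidableEq n] {𝕜 : Type*}

section NontriviallyNormedField

variable [NontriviallyNormedField 𝕜] [CompleteSpace 𝕜]

def traceMulCLM (A : Matrix n n 𝕜) : Matrix n n 𝕜 →L[𝕜] 𝕜 :=
  LinearMap.toContinuousLinearMap (traceLinearMap n 𝕜 𝕜 ∘ₗ LinearMap.mulLeft 𝕜 A)

@[simp]
theorem traceMulCLM_apply (A H : Matrix n n 𝕜) : A.traceMulCLM H = (A * H).trace := rfl

def mulLeftRightCLM (A B : Matrix n n 𝕜) : Matrix n n 𝕜 →L[𝕜] Matrix n n 𝕜 :=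
  LinearMap.toContinuousLinearMap (LinearMap.mulLeftRight 𝕜 (A, B))

def detRowContinuousAlternating : (n → 𝕜) [⋀^n]→L[𝕜] 𝕜 :=
  { detRowAlternating with cont := continuous_id.matrix_det }

theorem hasFDerivAt_det (A : Matrix n n 𝕜) :
    HasFDerivAt det A.adjugate.traceMulCLM A := by
  let e : Matrix n n 𝕜 ≃L[𝕜] (n → n → 𝕜) := (ofLinearEquiv 𝕜).symm.toContinuousLinearEquiv
  have h : HasFDerivAt det (detRowContinuousAlternating.linearDeriv (e A) ∘SL
      (e : Matrix n n 𝕜 →L[𝕜] (n → n → 𝕜))) A :=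
    (detRowContinuousAlternating.hasFDerivAt (e A)).comp A e.hasFDerivAt
  refine h.congr_fderiv ?_
  ext H
  simp only [ContinuousLinearMap.comp_apply, ContinuousMultilinearMap.linearDeriv_apply,
    traceMulCLM_apply, ← sum_det_updateRow]
  rfl

end NontriviallyNormedField

theorem hasFDerivAt_inv [RCLike 𝕜] {A : Matrix n n 𝕜} (hA : IsUnit A) :
    HasFDerivAt (fun M : Matrix n n 𝕜 => M⁻¹) (-mulLeftRightCLM A⁻¹ A⁻¹) A := by
  let : NormedRing (Matrix n n 𝕜) := frobeniusNormedRing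
  let : NormedAlgebra 𝕜 (Matrix n n 𝕜) := frobeniusNormedAlgebra
  obtain ⟨u, rfl⟩ := hA
  have h := hasFDerivAt_ringInverse (𝕜 := 𝕜) u
  rw [coe_units_inv, ← funext nonsing_inv_eq_ringInverse] at h
  exact h

theorem hasFDerivAt_det_rpow {A : Matrix n n ℝ} (hA : 0 < A.det) (p : ℝ) :
    HasFDerivAt (fun M : Matrix n n ℝ => M.det ^ p) ((p * A.det ^ p) • A⁻¹.traceMulCLM) A := by
  refine ((Real.hasDerivAt_rpow_const (Or.inl hA.ne')).comp_hasFDerivAt A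
    (hasFDerivAt_det A)).congr_fderiv ?_
  ext H
  change p * A.det ^ (p - 1) * (A.adjugate * H).trace = p * A.det ^ p * (A⁻¹ * H).trace
  rw [adjugate_eq_det_smul_inv hA.ne', smul_mul, trace_smul, smul_eq_mul, Real.rpow_sub_one hA.ne']
  field_simp

theorem hasFDerivAt_det_rpow_smul_inv {A : Matrix n n ℝ} (hA : 0 < A.det) (p : ℝ) :
    HasFDerivAt (fun M : Matrix n n ℝ => M.det ^ p • M⁻¹)
      (A.det ^ p • ((p • A⁻¹.traceMulCLM).smulRight A⁻¹ - mulLeftRightCLM A⁻¹ A⁻¹)) A := by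
  have hinv := hasFDerivAt_inv ((isUnit_iff_isUnit_det A).2 (isUnit_iff_ne_zero.2 hA.ne'))
  refine ((hasFDerivAt_det_rpow hA p).smul hinv).congr_fderiv ?_
  ext H : 1
  change A.det ^ p • -(A⁻¹ * H * A⁻¹) + (p * A.det ^ p * (A⁻¹ * H).trace) • A⁻¹
    = A.det ^ p • ((p * (A⁻¹ * H).trace) • A⁻¹ - A⁻¹ * H * A⁻¹)
  module

end Matrix

theorem secondPKofC_hasFDerivAt_general (μ β : ℝ)
    (C : Matrix (Fin 3) (Fin 3) ℝ) (hC : C.PosDef) :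
    ∃ L : Matrix (Fin 3) (Fin 3) ℝ →L[ℝ] Matrix (Fin 3) (Fin 3) ℝ,
      HasFDerivAt (secondPKofC μ β) L C ∧
      ∀ H : Matrix (Fin 3) (Fin 3) ℝ, Hᵀ = H →
        L H = (μ * C.det ^ (-β / 2)) •
            (C⁻¹ * H * C⁻¹ + (β / 2 * (C⁻¹ * H).trace) • C⁻¹) ∧
        ∀ i j : Fin 3, 2 * L H i j = μ * C.det ^ (-β / 2) *
            ∑ k : Fin 3, ∑ l : Fin 3,
              (C⁻¹ i l * C⁻¹ k j + C⁻¹ i k * C⁻¹ j l + β * C⁻¹ i j * C⁻¹ k l)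
                * H k l := by
  have hCinv : (C⁻¹)ᵀ = C⁻¹ := by
    rw [transpose_nonsing_inv, ← conjTranspose_eq_transpose_of_trivial, hC.isHermitian.eq]
  -- `L` is typed with the product topology on matrices, the derivative lemmas with the Frobenius
  -- one; the two agree only up to unfolding, hence the `change`.
  obtain ⟨L, hL, hLH⟩ : ∃ L : Matrix (Fin 3) (Fin 3) ℝ →L[ℝ] Matrix (Fin 3) (Fin 3) ℝ,
      HasFDerivAt (secondPKofC μ β) L C ∧ ∀ H, L H = (μ * C.det ^ (-β / 2)) •
        (C⁻¹ * H * C⁻¹ + (β / 2 * (C⁻¹ * H).trace) • C⁻¹) := by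
    refine ⟨_, ((hasFDerivAt_det_rpow_smul_inv hC.det_pos (-β / 2)).const_sub 1).const_smul μ,
      fun H => ?_⟩
    change μ • -(C.det ^ (-β / 2) • ((-β / 2 * (C⁻¹ * H).trace) • C⁻¹ - C⁻¹ * H * C⁻¹)) = _
    module
  refine ⟨L, hL, fun H hH => ⟨hLH H, fun i j => ?_⟩⟩
  rw [hLH, Matrix.smul_apply, smul_eq_mul, mul_left_comm,
    two_mul_mul_mul_add_trace_smul_apply hCinv hH]

/-- For a symmetric positive-definite `C`, the map `S(C) = μ(1 − (det C)^(−β/2) C⁻¹)`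
is Fréchet differentiable at `C` and, for every symmetric direction `H`,
`DS(C)[H] = μ (det C)^(−β/2) (C⁻¹ H C⁻¹ + (β/2) trace(C⁻¹ H) C⁻¹)`;
equivalently, in components,
`2 (DS(C)[H])_{ij} = μ (det C)^(−β/2) Σ_{k,l} ((C⁻¹)_{il}(C⁻¹)_{kj}
  + (C⁻¹)_{ik}(C⁻¹)_{jl} + β (C⁻¹)_{ij}(C⁻¹)_{kl}) H_{kl}`,
the material tangent modulus `ℂ^{SE} = 2 ∂S/∂C`. -/
theorem secondPKofC_hasFDerivAt (μ β : ℝ) (hμ : 0 < μ)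
    (C : Matrix (Fin 3) (Fin 3) ℝ) (hC : C.PosDef) :
    ∃ L : Matrix (Fin 3) (Fin 3) ℝ →L[ℝ] Matrix (Fin 3) (Fin 3) ℝ,
      HasFDerivAt (secondPKofC μ β) L C ∧
      ∀ H : Matrix (Fin 3) (Fin 3) ℝ, Hᵀ = H →
        L H = (μ * C.det ^ (-β / 2)) •
            (C⁻¹ * H * C⁻¹ + (β / 2 * (C⁻¹ * H).trace) • C⁻¹) ∧
        ∀ i j : Fin 3, 2 * L H i j = μ * C.det ^ (-β / 2) *
            ∑ k : Fin 3, ∑ l : Fin 3,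
              (C⁻¹ i l * C⁻¹ k j + C⁻¹ i k * C⁻¹ j l + β * C⁻¹ i j * C⁻¹ k l)
                * H k l :=
  secondPKofC_hasFDerivAt_general μ β C hC
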